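/- Suppose $\varphi_k > 0$ and symmetric matrices $P_1,\dots,P_r, M$ satisfy $P(\alpha) \succ 0$, $P_k + M \succeq 0$ for all $k$, and $\sum_{k=1}^r \varphi_k (P_k + M) + P(\alpha)A(\alpha) + A(\alpha)^T P(\alpha) \prec 0$ for all $\alpha \in \Lambda_r$. Then for any $\alpha \in \Lambda_r$ and any real numbers $d_1,\dots,d_r$ with $\sum_k d_k = 0$ and $|d_k| \le \varphi_k$, one has $\sum_{k=1}^r d_k P_k + P(\alpha)A(\alpha) + A(\alpha)^T P(\alpha) \prec 0$. -/

import Mathlib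

open Matrix BigOperators

def unitSimplex (r : ℕ) : Set (Fin r → ℝ) :=
  {α | (∑ i, α i) = 1 ∧ ∀ i, 0 ≤ α i ∧ α i ≤ 1}

def NegDef {n : ℕ} (M : Matrix (Fin n) (Fin n) ℝ) : Prop :=
  ∀ x : Fin n → ℝ, x ≠ 0 → x ⬝ᵥ M *ᵥ x < 0

/-! Since `∑ k, d k = 0`, the shift `m` may be added to every `q k` for free; afterwards
`|d k| ≤ φ k` and `0 ≤ q k + m` bound each term. -/
theorem Finset.sum_mul_le_sum_mul_add_of_sum_eq_zero {ι R : Type*} [CommRing R] [LinearOrder R]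
    [IsStrictOrderedRing R] (s : Finset ι) {d φ q : ι → R} {m : R} (hd : ∑ k ∈ s, d k = 0)
    (hdφ : ∀ k ∈ s, |d k| ≤ φ k) (hqm : ∀ k ∈ s, 0 ≤ q k + m) :
    ∑ k ∈ s, d k * q k ≤ ∑ k ∈ s, φ k * (q k + m) :=
  calc ∑ k ∈ s, d k * q k = ∑ k ∈ s, d k * (q k + m) := by
        simp only [mul_add, Finset.sum_add_distrib, ← Finset.sum_mul, hd, zero_mul, add_zero]
    _ ≤ ∑ k ∈ s, φ k * (q k + m) := Finset.sum_le_sum fun k hk =>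
        mul_le_mul_of_nonneg_right ((le_abs_self _).trans (hdφ k hk)) (hqm k hk)

theorem Matrix.dotProduct_sum_smul_mulVec {m ι R : Type*} [Fintype m] [Fintype ι] [CommRing R]
    (N : ι → Matrix m m R) (c : ι → R) (x : m → R) :
    x ⬝ᵥ (∑ k, c k • N k) *ᵥ x = ∑ k, c k * (x ⬝ᵥ N k *ᵥ x) := by
  simp [sum_mulVec, smul_mulVec, dotProduct_sum, dotProduct_smul]

theorem NegDef.of_dotProduct_mulVec_le {n : ℕ} {N N' : Matrix (Fin n) (Fin n) ℝ}
    (hle : ∀ x, x ⬝ᵥ N *ᵥ x ≤ x ⬝ᵥ N' *ᵥ x) (hN' : NegDef N') : NegDef N :=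
  fun x hx => (hle x).trans_lt (hN' x hx)

theorem stmt19_general {n r : ℕ} (A P : Fin r → Matrix (Fin n) (Fin n) ℝ)
    (M : Matrix (Fin n) (Fin n) ℝ)
    (φ : Fin r → ℝ)
    (hPM : ∀ k, (P k + M).PosSemidef)
    (hlmi : ∀ α ∈ unitSimplex r,
      NegDef ((∑ k, φ k • (P k + M))
        + (∑ i, α i • P i) * (∑ i, α i • A i)
        + (∑ i, α i • A i)ᵀ * (∑ i, α i • P i))) :
    ∀ α ∈ unitSimplex r, ∀ d : Fin r → ℝ, (∑ k, d k) = 0 → (∀ k, |d k| ≤ φ k) →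
      NegDef ((∑ k, d k • P k)
        + (∑ i, α i • P i) * (∑ i, α i • A i)
        + (∑ i, α i • A i)ᵀ * (∑ i, α i • P i)) := by
  intro α hα d hd hdφ
  refine (hlmi α hα).of_dotProduct_mulVec_le fun x => ?_
  have hqm : ∀ k, 0 ≤ x ⬝ᵥ P k *ᵥ x + x ⬝ᵥ M *ᵥ x := fun k => by
    simpa [add_mulVec, dotProduct_add] using (hPM k).dotProduct_mulVec_nonneg x
  have hsum := Finset.univ.sum_mul_le_sum_mul_add_of_sum_eq_zero hd (fun k _ => hdφ k)
    (fun k _ => hqm k)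
  simp only [add_mulVec, dotProduct_add, dotProduct_sum_smul_mulVec] at hsum ⊢
  linarith

theorem stmt19 {n r : ℕ} (A P : Fin r → Matrix (Fin n) (Fin n) ℝ)
    (hPsymm : ∀ i, (P i).IsSymm) (M : Matrix (Fin n) (Fin n) ℝ) (hM : M.IsSymm)
    (φ : Fin r → ℝ) (hφ : ∀ k, 0 < φ k)
    (hPpos : ∀ α ∈ unitSimplex r, (∑ i, α i • P i).PosDef)
    (hPM : ∀ k, (P k + M).PosSemidef)
    (hlmi : ∀ α ∈ unitSimplex r,
      NegDef ((∑ k, φ k • (P k + M))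
        + (∑ i, α i • P i) * (∑ i, α i • A i)
        + (∑ i, α i • A i)ᵀ * (∑ i, α i • P i))) :
    ∀ α ∈ unitSimplex r, ∀ d : Fin r → ℝ, (∑ k, d k) = 0 → (∀ k, |d k| ≤ φ k) →
      NegDef ((∑ k, d k • P k)
        + (∑ i, α i • P i) * (∑ i, α i • A i)
        + (∑ i, α i • A i)ᵀ * (∑ i, α i • P i)) :=
  stmt19_general A P M φ hPM hlmi
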